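/- Let α ≥ 2 be an integer and let C be a minimal d_α-D_α cut in A_α with C ≠ {d_α}. Then there exist two (possibly empty) disjoint sets J_1 and J_2 with J_1 ∪ J_2 = {1,…,α−1} such that: (i) x_S ∈ C for every S ⊆ {1,…,α−1} with |S| ≥ 2, J_1 ∩ S ≠ ∅ and J_2 ∩ S ≠ ∅; (ii) x_{S∪{α}} ∈ C for every nonempty S ⊆ {1,…,α−1} with J_2 ∩ S ≠ ∅; and (iii) if J_2 = ∅ then d_S ∈ C for every nonempty S ⊆ {1,…,α−1}. -/

import Mathlib

/-- Raw vertex names for the auxiliary graph `A_α`: the special vertex `top = d_α`,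
vertices `d S`, and vertices `x S`. -/
inductive AV : Type where
  | top : AV
  | d : Finset ℕ → AV
  | x : Finset ℕ → AV
deriving DecidableEq

/-- The vertices actually present in `A_α`: `d_α`; `d S` for nonempty
`S ⊆ {1, …, α-1}`; and `x S` for `S ⊆ {1, …, α}` with `|S| ≥ 2`. -/
def AValid (α : ℕ) : AV → Prop
  | AV.top => True
  | AV.d S => S.Nonempty ∧ S ⊆ Finset.Icc 1 (α - 1)
  | AV.x S => 2 ≤ S.card ∧ S ⊆ Finset.Icc 1 α

/-- One-sided adjacency for `A_α`: `d_α x_S` when `α ∈ S`; `d_S x_T` when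
`S ∩ T ≠ ∅`; `x_S x_T` when `S ≠ T` and `S ∩ T ≠ ∅`. -/
def AAdj (α : ℕ) : AV → AV → Prop
  | AV.top, AV.x S => α ∈ S
  | AV.d S, AV.x T => (S ∩ T).Nonempty
  | AV.x S, AV.x T => S ≠ T ∧ (S ∩ T).Nonempty
  | _, _ => False

/-- The auxiliary graph `A_α`, on the valid vertices. -/
def Agraph (α : ℕ) : SimpleGraph {v : AV // AValid α v} where
  Adj a b := AAdj α a.1 b.1 ∨ AAdj α b.1 a.1
  symm := ⟨fun _ _ h => Or.symm h⟩
  loopless := by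
    constructor
    rintro ⟨v, hv⟩ h
    rcases v with _ | S | S <;> simp only [AAdj] at h <;> tauto

/-- The vertex `d_α` of `A_α`. -/
def dTop (α : ℕ) : {v : AV // AValid α v} := ⟨AV.top, trivial⟩

/-- The set `D_α = {d_S : S ⊆ {1, …, α-1}, S ≠ ∅}` of vertices of `A_α`. -/
def Dset (α : ℕ) : Set {v : AV // AValid α v} := {v | ∃ S, v.1 = AV.d S}

/-- `C` is an `A`-`B` cut in `G`: the graph `G - C` (i.e. the subgraph of `G`
induced on `Cᶜ`) contains no path from `A \ C` to `B \ C`. -/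
def IsCut {V : Type*} (G : SimpleGraph V) (A B C : Set V) : Prop :=
  ∀ (a b : ↥(Cᶜ : Set V)), (a : V) ∈ A → (b : V) ∈ B →
    ¬ (G.induce (Cᶜ : Set V)).Reachable a b

/-- `C` is a minimal `A`-`B` cut in `G`. -/
def IsMinimalCut {V : Type*} (G : SimpleGraph V) (A B C : Set V) : Prop :=
  IsCut G A B C ∧ ∀ x ∈ C, ¬ IsCut G A B (C \ {x})

/-- Validity of the vertex `x_{S ∪ {α}}` for nonempty `S ⊆ {1, …, α-1}`. -/
lemma aValid_x_union (α : ℕ) (hα : 2 ≤ α) (S : Finset ℕ)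
    (hS : S ⊆ Finset.Icc 1 (α - 1)) (hne : S.Nonempty) :
    AValid α (AV.x (S ∪ {α})) := by
  have hαS : α ∉ S := by
    intro h
    have := (Finset.mem_Icc.1 (hS h)).2
    omega
  constructor
  · have hcard : (S ∪ {α}).card = S.card + 1 := by
      rw [Finset.union_comm, ← Finset.insert_eq, Finset.card_insert_of_notMem hαS]
    have : 1 ≤ S.card := Finset.one_le_card.2 hne
    omega
  · refine Finset.union_subset (hS.trans (Finset.Icc_subset_Icc le_rfl (Nat.sub_le α 1))) ?_
    simp only [Finset.singleton_subset_iff, Finset.mem_Icc]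
    omega

/-- Validity of the vertex `x_R` for `R ⊆ {1, …, α-1}` with `|R| ≥ 2`. -/
lemma aValid_x_low (α : ℕ) (R : Finset ℕ) (hR : R ⊆ Finset.Icc 1 (α - 1))
    (hcard : 2 ≤ R.card) : AValid α (AV.x R) :=
  ⟨hcard, hR.trans (Finset.Icc_subset_Icc le_rfl (Nat.sub_le α 1))⟩

/-
Let `K` be the set of vertices reachable from `d_α` in `A_α - C`; `d_α ∉ C` because otherwise
`{d_α}` alone would already be a cut strictly inside `C`. Let `J₁` be the indices `i < α`
lying in some `x_T ∈ K` and `J₂` the others. Any `x_S ∉ C` meeting `J₁` is equal or adjacent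
to such an `x_T`, hence lies in `K`, so `S` misses `J₂`: this is (i). Every `x_{S ∪ {α}}` is
adjacent to `d_α`, which gives (ii). If `J₂ = ∅`, each `d_S ∉ C` would be adjacent to some
`x_T ∈ K`, joining `d_α` to `D_α` outside `C`: this is (iii).
-/

section Cut

variable {V : Type*} {G : SimpleGraph V} {A B C : Set V} {a v w : V}

lemma isCut_of_subset (hAC : A ⊆ C) : IsCut G A B C :=
  fun a _ ha _ _ => a.2 (hAC ha)

lemma IsMinimalCut.notMem_of_ne_singleton (hC : IsMinimalCut G {a} B C) (hne : C ≠ {a}) :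
    a ∉ C := by
  intro haC
  obtain ⟨x, hxC, hxa⟩ : ∃ x ∈ C, x ≠ a := by
    by_contra! h
    exact hne (Set.eq_singleton_iff_unique_mem.2 ⟨haC, h⟩)
  exact hC.2 x hxC (isCut_of_subset (Set.singleton_subset_iff.2 ⟨haC, Ne.symm hxa⟩))

variable (G C) in
def cutComponent (a : V) : Set V :=
  {v | ∃ (ha : a ∉ C) (hv : v ∉ C), (G.induce Cᶜ).Reachable ⟨a, ha⟩ ⟨v, hv⟩}

lemma mem_cutComponent_self (ha : a ∉ C) : a ∈ cutComponent G C a :=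
  ⟨ha, ha, .refl _⟩

lemma mem_cutComponent_of_adj (hv : v ∈ cutComponent G C a) (hw : w ∉ C) (hvw : G.Adj v w) :
    w ∈ cutComponent G C a := by
  obtain ⟨ha, hv, hav⟩ := hv
  have hvw' : (G.induce Cᶜ).Adj ⟨v, hv⟩ ⟨w, hw⟩ := hvw
  exact ⟨ha, hw, hav.trans hvw'.reachable⟩

lemma IsCut.notMem_cutComponent (hC : IsCut G A B C) (ha : a ∈ A) (hb : v ∈ B) :
    v ∉ cutComponent G C a :=
  fun ⟨ha', hv, hav⟩ => hC ⟨a, ha'⟩ ⟨v, hv⟩ ha hb hav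

end Cut

section Agraph

open Finset Classical

variable {α : ℕ} {C : Set {v : AV // AValid α v}}

variable (α C) in
noncomputable def hitIndices : Finset ℕ :=
  (Icc 1 (α - 1)).filter fun i => ∃ (T : Finset ℕ) (h : AValid α (AV.x T)),
    i ∈ T ∧ ⟨AV.x T, h⟩ ∈ cutComponent (Agraph α) C (dTop α)

lemma hitIndices_subset : hitIndices α C ⊆ Icc 1 (α - 1) :=
  filter_subset _ _

lemma mem_hitIndices {i : ℕ} {T : Finset ℕ} {h : AValid α (AV.x T)} (hi : i ∈ Icc 1 (α - 1))
    (hiT : i ∈ T) (hT : ⟨AV.x T, h⟩ ∈ cutComponent (Agraph α) C (dTop α)) :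
    i ∈ hitIndices α C :=
  mem_filter.2 ⟨hi, T, h, hiT, hT⟩

lemma x_mem_cutComponent_of_mem_hitIndices {i : ℕ} {S : Finset ℕ} {h : AValid α (AV.x S)}
    (hi : i ∈ hitIndices α C) (hiS : i ∈ S) (hS : ⟨AV.x S, h⟩ ∉ C) :
    ⟨AV.x S, h⟩ ∈ cutComponent (Agraph α) C (dTop α) := by
  obtain ⟨T, _, hiT, hTK⟩ := (mem_filter.1 hi).2
  by_cases hTS : T = S
  · subst hTS
    exact hTK
  · exact mem_cutComponent_of_adj hTK hS (Or.inl ⟨hTS, i, mem_inter.2 ⟨hiT, hiS⟩⟩)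

lemma d_mem_cutComponent_of_mem_hitIndices {i : ℕ} {S : Finset ℕ} {h : AValid α (AV.d S)}
    (hi : i ∈ hitIndices α C) (hiS : i ∈ S) (hS : ⟨AV.d S, h⟩ ∉ C) :
    ⟨AV.d S, h⟩ ∈ cutComponent (Agraph α) C (dTop α) := by
  obtain ⟨T, _, hiT, hTK⟩ := (mem_filter.1 hi).2
  exact mem_cutComponent_of_adj hTK hS (Or.inr ⟨i, mem_inter.2 ⟨hiS, hiT⟩⟩)

lemma x_mem_of_meets_hitIndices_of_meets_compl {S : Finset ℕ} (hS : S ⊆ Icc 1 (α - 1))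
    (hcard : 2 ≤ S.card) (hhit : (hitIndices α C ∩ S).Nonempty)
    (hmiss : ((Icc 1 (α - 1) \ hitIndices α C) ∩ S).Nonempty) :
    ⟨AV.x S, aValid_x_low α S hS hcard⟩ ∈ C := by
  by_contra hSC
  obtain ⟨i, hi⟩ := hhit
  obtain ⟨j, hj⟩ := hmiss
  obtain ⟨hjIcc, hjhit⟩ := mem_sdiff.1 (mem_inter.1 hj).1
  exact hjhit (mem_hitIndices hjIcc (mem_inter.1 hj).2 <|
    x_mem_cutComponent_of_mem_hitIndices (mem_inter.1 hi).1 (mem_inter.1 hi).2 hSC)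

lemma x_union_mem_of_meets_compl_hitIndices (hα : 2 ≤ α) (htop : dTop α ∉ C) {S : Finset ℕ}
    (hSne : S.Nonempty) (hS : S ⊆ Icc 1 (α - 1))
    (hmiss : ((Icc 1 (α - 1) \ hitIndices α C) ∩ S).Nonempty) :
    ⟨AV.x (S ∪ {α}), aValid_x_union α hα S hS hSne⟩ ∈ C := by
  by_contra hSC
  obtain ⟨j, hj⟩ := hmiss
  obtain ⟨hjIcc, hjhit⟩ := mem_sdiff.1 (mem_inter.1 hj).1
  have hK := mem_cutComponent_of_adj (mem_cutComponent_self (G := Agraph α) htop) hSC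
    (Or.inl (mem_union_right S (mem_singleton_self α)))
  exact hjhit (mem_hitIndices hjIcc (mem_union_left _ (mem_inter.1 hj).2) hK)

lemma d_mem_of_hitIndices_eq (hcut : IsCut (Agraph α) {dTop α} (Dset α) C)
    (hhit : Icc 1 (α - 1) \ hitIndices α C = ∅) {S : Finset ℕ} (hSne : S.Nonempty)
    (hS : S ⊆ Icc 1 (α - 1)) : ⟨AV.d S, hSne, hS⟩ ∈ C := by
  by_contra hSC
  obtain ⟨i, hiS⟩ := hSne
  have hi : i ∈ hitIndices α C := sdiff_eq_empty_iff_subset.1 hhit (hS hiS)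
  exact hcut.notMem_cutComponent rfl ⟨S, rfl⟩
    (d_mem_cutComponent_of_mem_hitIndices hi hiS hSC)

end Agraph

/-- Let `C` be a minimal `d_α`-`D_α` cut in `A_α` with `C ≠ {d_α}`.  Then there are
two (possibly empty) disjoint sets `J₁, J₂` with `J₁ ∪ J₂ = {1, …, α-1}` such that:
(i) `x_S ∈ C` for every `S ⊆ {1, …, α-1}` with `|S| ≥ 2`, `J₁ ∩ S ≠ ∅` and
`J₂ ∩ S ≠ ∅`; (ii) `x_{S ∪ {α}} ∈ C` for every nonempty `S ⊆ {1, …, α-1}` with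
`J₂ ∩ S ≠ ∅`; (iii) if `J₂ = ∅` then `d_S ∈ C` for every nonempty
`S ⊆ {1, …, α-1}`. -/
theorem cut_partition (α : ℕ) (hα : 2 ≤ α) (C : Set {v : AV // AValid α v})
    (hC : IsMinimalCut (Agraph α) {dTop α} (Dset α) C) (hCne : C ≠ {dTop α}) :
    ∃ J₁ J₂ : Finset ℕ, Disjoint J₁ J₂ ∧ J₁ ∪ J₂ = Finset.Icc 1 (α - 1) ∧
      (∀ (S : Finset ℕ) (hS : S ⊆ Finset.Icc 1 (α - 1)) (hcard : 2 ≤ S.card),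
        (J₁ ∩ S).Nonempty → (J₂ ∩ S).Nonempty →
        (⟨AV.x S, aValid_x_low α S hS hcard⟩ : {v : AV // AValid α v}) ∈ C) ∧
      (∀ (S : Finset ℕ) (hSne : S.Nonempty) (hS : S ⊆ Finset.Icc 1 (α - 1)),
        (J₂ ∩ S).Nonempty →
        (⟨AV.x (S ∪ {α}), aValid_x_union α hα S hS hSne⟩ :
          {v : AV // AValid α v}) ∈ C) ∧
      (J₂ = ∅ →
        ∀ (S : Finset ℕ) (hSne : S.Nonempty) (hS : S ⊆ Finset.Icc 1 (α - 1)),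
        (⟨AV.d S, hSne, hS⟩ : {v : AV // AValid α v}) ∈ C) := by
  have htop := hC.notMem_of_ne_singleton hCne
  refine ⟨hitIndices α C, Finset.Icc 1 (α - 1) \ hitIndices α C, Finset.disjoint_sdiff, ?_,
    fun S hS hcard => x_mem_of_meets_hitIndices_of_meets_compl hS hcard,
    fun S hSne hS => x_union_mem_of_meets_compl_hitIndices hα htop hSne hS,
    fun hJ₂ S => d_mem_of_hitIndices_eq hC.1 hJ₂⟩
  exact Finset.union_sdiff_of_subset hitIndices_subset
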